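/- (Goldman–Joichi–White factorization) If B = (b_1,…,b_n) is a Ferrers board with n columns, then, as polynomials in x (equivalently, for every integer x), ∑_{k=0}^{n} r_k(B) · x↓_{n−k} = ∏_{i=1}^{n} (x + b_i − (i−1)), where x↓_j = x(x−1)⋯(x−j+1) is the j-th falling factorial (with x↓_0 = 1). -/

import Mathlib

/-- A (non-attacking) rook placement on the board with column heights `b`:
a set of cells (column, row) inside the board, no two sharing a column or a row.
Cells are 0-indexed: cell `(i, j)` lies in the board iff `j < b i`. -/
def IsRookPlacement {n : ℕ} (b : Fin n → ℕ) (P : Finset (Fin n × ℕ)) : Prop :=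
  (∀ c ∈ P, c.2 < b c.1) ∧
  ∀ c ∈ P, ∀ d ∈ P, c ≠ d → c.1 ≠ d.1 ∧ c.2 ≠ d.2

/-- The `k`-th rook number of the board `b`: the number of placements of `k`
non-attacking rooks on `b`. -/
noncomputable def rookNum {n : ℕ} (b : Fin n → ℕ) (k : ℕ) : ℕ :=
  Set.ncard {P : Finset (Fin n × ℕ) | IsRookPlacement b P ∧ P.card = k}

/-- Two boards are rook equivalent if all their rook numbers agree. -/
def RookEquiv {n₁ n₂ : ℕ} (b₁ : Fin n₁ → ℕ) (b₂ : Fin n₂ → ℕ) : Prop :=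
  ∀ k, rookNum b₁ k = rookNum b₂ k

/-- The root vector of a board: the (0-indexed) `i`-th entry is `i - b i`
(1-indexed: `(i-1) - b_i`). -/
def rootVec {n : ℕ} (b : Fin n → ℕ) : Fin n → ℤ := fun i => (i : ℤ) - (b i : ℤ)

/-- `b₁` is obtained from `b₂` by moving `k > 0` squares out of one column into a
single other column: the boards agree except in columns `i` and `j`, where `b₁`
has `k` more squares in column `i` and `k` fewer in column `j`. -/
def MovesSquares {n : ℕ} (b₁ b₂ : Fin n → ℕ) : Prop :=
  ∃ (i j : Fin n) (k : ℕ), i ≠ j ∧ 0 < k ∧ b₁ i = b₂ i + k ∧ b₂ j = b₁ j + k ∧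
    ∀ l, l ≠ i → l ≠ j → b₁ l = b₂ l

/-- A Ferrers board with `n` columns: a weakly increasing sequence of column heights. -/
def FerrersBoard (n : ℕ) : Type := {b : Fin n → ℕ // Monotone b}

/-- The rook equivalence graph of the equivalence class of `B`: vertices are the
Ferrers boards with `n` columns rook equivalent to `B`; two distinct boards are
adjacent when one is obtained from the other by moving squares out of one column
into a single other column. -/
def rookEquivGraph {n : ℕ} (B : FerrersBoard n) :
    SimpleGraph {C : FerrersBoard n // RookEquiv C.1 B.1} :=
  SimpleGraph.fromRel fun C D => MovesSquares C.1.1 D.1.1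

/-- `entryCount b k` is `v_k`, the number of entries of the root vector of `b`
equal to `k`. -/
def entryCount {n : ℕ} (b : Fin n → ℕ) (k : ℕ) : ℕ :=
  (Finset.univ.filter fun l => rootVec b l = (k : ℤ)).card

/-- The `j`-th falling factorial `x↓_j = x(x-1)⋯(x-(j-1))`, with `x↓_0 = 1`. -/
def fallFact (x : ℤ) (j : ℕ) : ℤ := ∏ i ∈ Finset.range j, (x - (i : ℤ))

/-!
Removing the tallest (last) column `j` of a Ferrers board gives the recurrence
`r_{k+1}(b) = r_{k+1}(b') + (b_j - k) r_k(b')`: a placement either avoids column `j`, or has one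
rook there, in one of the `b_j - k` rows left free by the other `k` rooks (all of which lie below
height `b_j`). Combined with `(x + b_j - m) x↓_{m-k} = (b_j - k) x↓_{m-k} + x↓_{m+1-k}`, this shows
that adding column `j` multiplies the left-hand side by `x + b_j - m`. A column is removed by
setting its height to `0`, so the induction runs over the boards `firstColumns b m` that keep only
the first `m` columns of `b`.
-/

open Finset Function

variable {n : ℕ} {b : Fin n → ℕ}

namespace IsRookPlacement

variable {P Q : Finset (Fin n × ℕ)}

theorem empty (b : Fin n → ℕ) : IsRookPlacement b ∅ := ⟨by simp, by simp⟩

theorem mono (h : IsRookPlacement b P) (hQ : Q ⊆ P) : IsRookPlacement b Q :=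
  ⟨fun c hc => h.1 c (hQ hc), fun c hc d hd => h.2 c (hQ hc) d (hQ hd)⟩

theorem insert (h : IsRookPlacement b P) {c : Fin n × ℕ} (hc : c.2 < b c.1)
    (hsep : ∀ d ∈ P, c.1 ≠ d.1 ∧ c.2 ≠ d.2) : IsRookPlacement b (Insert.insert c P) := by
  refine ⟨forall_mem_insert _ _ _ |>.mpr ⟨hc, h.1⟩, fun d hd e he hde => ?_⟩
  rcases mem_insert.mp hd with rfl | hd' <;> rcases mem_insert.mp he with rfl | he'
  · exact absurd rfl hde
  · exact hsep e he'
  · exact ⟨(hsep d hd').1.symm, (hsep d hd').2.symm⟩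
  · exact h.2 d hd' e he' hde

theorem injOn_fst (h : IsRookPlacement b P) : Set.InjOn Prod.fst (P : Set (Fin n × ℕ)) :=
  fun c hc d hd hcd => by_contra fun hne => (h.2 c hc d hd hne).1 hcd

theorem injOn_snd (h : IsRookPlacement b P) : Set.InjOn Prod.snd (P : Set (Fin n × ℕ)) :=
  fun c hc d hd hcd => by_contra fun hne => (h.2 c hc d hd hne).2 hcd

theorem card_le (h : IsRookPlacement b P) : #P ≤ #{i | b i ≠ 0} := by
  rw [← card_image_of_injOn h.injOn_fst]
  refine card_le_card fun i hi => ?_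
  obtain ⟨c, hc, rfl⟩ := mem_image.mp hi
  simpa using (h.1 c hc).ne_bot

end IsRookPlacement

open Classical in
noncomputable def rookPlacements (b : Fin n → ℕ) (k : ℕ) : Finset (Finset (Fin n × ℕ)) :=
  (univ ×ˢ range (univ.sup b)).powerset.filter fun P => IsRookPlacement b P ∧ #P = k

theorem mem_rookPlacements {k : ℕ} {P : Finset (Fin n × ℕ)} :
    P ∈ rookPlacements b k ↔ IsRookPlacement b P ∧ #P = k := by
  classical
  unfold rookPlacements
  rw [mem_filter, mem_powerset, and_iff_right_iff_imp]
  refine fun h c hc => ?_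
  simpa using (h.1.1 c hc).trans_le (le_sup (mem_univ c.1))

theorem rookNum_eq_card (b : Fin n → ℕ) (k : ℕ) : rookNum b k = #(rookPlacements b k) := by
  rw [rookNum, ← Set.ncard_coe_finset]
  congr 1
  ext P
  simp [mem_rookPlacements]

theorem rookNum_zero (b : Fin n → ℕ) : rookNum b 0 = 1 := by
  rw [rookNum_eq_card, card_eq_one]
  refine ⟨∅, eq_singleton_iff_unique_mem.mpr ⟨?_, fun P hP => ?_⟩⟩
  · exact mem_rookPlacements.mpr ⟨IsRookPlacement.empty b, card_empty⟩
  · exact card_eq_zero.mp (mem_rookPlacements.mp hP).2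

theorem rookNum_eq_zero_of_lt {k : ℕ} (hk : #{i | b i ≠ 0} < k) : rookNum b k = 0 := by
  rw [rookNum_eq_card, card_eq_zero, eq_empty_iff_forall_notMem]
  intro P hP
  obtain ⟨hrook, rfl⟩ := mem_rookPlacements.mp hP
  exact hk.not_ge hrook.card_le

section RemoveColumn

variable {j : Fin n} {P : Finset (Fin n × ℕ)}

theorem isRookPlacement_update_zero_iff :
    IsRookPlacement (update b j 0) P ↔ IsRookPlacement b P ∧ ∀ c ∈ P, c.1 ≠ j := by
  have hcol : IsRookPlacement (update b j 0) P → ∀ c ∈ P, c.1 ≠ j := fun h c hc hcj => by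
    simpa [hcj] using h.1 c hc
  refine ⟨fun h => ⟨⟨fun c hc => ?_, h.2⟩, hcol h⟩, fun ⟨h, hj⟩ => ⟨fun c hc => ?_, h.2⟩⟩
  · simpa [update_of_ne (hcol h c hc)] using h.1 c hc
  · simpa [update_of_ne (hj c hc)] using h.1 c hc

theorem filter_rookPlacements_forall_ne (j : Fin n) (k : ℕ) :
    (rookPlacements b k).filter (fun P => ∀ c ∈ P, c.1 ≠ j) = rookPlacements (update b j 0) k := by
  ext P
  simp only [mem_filter, mem_rookPlacements, isRookPlacement_update_zero_iff]
  tauto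

theorem card_filter_rookPlacements_not_forall_ne (k : ℕ) :
    #((rookPlacements b (k + 1)).filter fun P => ¬∀ c ∈ P, c.1 ≠ j) =
      ∑ Q ∈ rookPlacements (update b j 0) k, #(range (b j) \ Q.image Prod.snd) := by
  rw [← card_sigma]
  symm
  refine card_bij (fun x _ => insert (j, x.2) x.1) ?_ ?_ ?_
  · rintro ⟨Q, r⟩ hx
    obtain ⟨hQ, hr⟩ := mem_sigma.mp hx
    obtain ⟨hrook, rfl⟩ := mem_rookPlacements.mp hQ
    obtain ⟨hQb, hQj⟩ := isRookPlacement_update_zero_iff.mp hrook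
    simp only [mem_sdiff, mem_range, mem_image, not_exists, not_and] at hr
    have hsep : ∀ d ∈ Q, j ≠ d.1 ∧ r ≠ d.2 := fun d hd => ⟨(hQj d hd).symm, Ne.symm (hr.2 d hd)⟩
    have hnot : (j, r) ∉ Q := fun h => (hsep _ h).1 rfl
    simp only [mem_filter, mem_rookPlacements, card_insert_of_notMem hnot]
    exact ⟨⟨hQb.insert hr.1 hsep, trivial⟩, fun h => h _ (mem_insert_self _ _) rfl⟩
  · rintro ⟨Q, r⟩ hx ⟨Q', r'⟩ hx' heq
    have hj : ∀ {R : Finset (Fin n × ℕ)}, R ∈ rookPlacements (update b j 0) k → ∀ c ∈ R, c.1 ≠ j :=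
      fun hR => (isRookPlacement_update_zero_iff.mp (mem_rookPlacements.mp hR).1).2
    have hQ := hj (mem_sigma.mp hx).1
    have hQ' := hj (mem_sigma.mp hx').1
    have hrow : (j, r) ∈ insert (j, r') Q' := heq ▸ mem_insert_self _ _
    have hcols := congrArg (filter fun c => c.1 ≠ j) heq
    simp only [filter_insert, ne_eq, not_true_eq_false, if_false] at hcols
    rw [filter_true_of_mem hQ, filter_true_of_mem hQ'] at hcols
    rcases mem_insert.mp hrow with h | h
    · cases h; cases hcols; rfl
    · exact absurd rfl (hQ' _ h)
  · intro P hP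
    simp only [mem_filter, mem_rookPlacements, not_forall, not_not] at hP
    obtain ⟨⟨hP, hcard⟩, ⟨j', r⟩, hjr, rfl⟩ := hP
    have hsep : ∀ d ∈ P.erase (j', r), d.1 ≠ j' ∧ d.2 ≠ r := fun d hd =>
      hP.2 d (mem_of_mem_erase hd) _ hjr (ne_of_mem_erase hd)
    refine ⟨⟨P.erase (j', r), r⟩, mem_sigma.mpr ⟨?_, ?_⟩, insert_erase hjr⟩
    · refine mem_rookPlacements.mpr ⟨isRookPlacement_update_zero_iff.mpr
        ⟨hP.mono (erase_subset _ _), fun d hd => (hsep d hd).1⟩, ?_⟩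
      simp [card_erase_of_mem hjr, hcard]
    · simp only [mem_sdiff, mem_range, mem_image, not_exists, not_and]
      exact ⟨hP.1 _ hjr, fun d hd => (hsep d hd).2⟩

/-- Every row used by a placement avoiding the tallest column `j` lies below the top of
column `j`, so `k` such rooks leave exactly `b j - k` free rows there. -/
theorem rookNum_succ (hj : ∀ i, b i ≤ b j) (k : ℕ) :
    (rookNum b (k + 1) : ℤ) =
      rookNum (update b j 0) (k + 1) + ((b j : ℤ) - k) * rookNum (update b j 0) k := by
  have hfree : ∀ Q ∈ rookPlacements (update b j 0) k,
      (#(range (b j) \ Q.image Prod.snd) : ℤ) = b j - k := by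
    intro Q hQ
    obtain ⟨hrook, rfl⟩ := mem_rookPlacements.mp hQ
    have hrows : Q.image Prod.snd ⊆ range (b j) := fun r hr => by
      obtain ⟨c, hc, rfl⟩ := mem_image.mp hr
      exact mem_range.mpr
        (((isRookPlacement_update_zero_iff.mp hrook).1.1 c hc).trans_le (hj c.1))
    rw [card_sdiff_of_subset hrows, Nat.cast_sub (card_le_card hrows), card_range,
      card_image_of_injOn hrook.injOn_snd]
  rw [rookNum_eq_card, rookNum_eq_card, rookNum_eq_card,
    ← card_filter_add_card_filter_not (fun P => ∀ c ∈ P, c.1 ≠ j),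
    filter_rookPlacements_forall_ne, card_filter_rookPlacements_not_forall_ne, Nat.cast_add,
    Nat.cast_sum, sum_congr rfl hfree, sum_const, nsmul_eq_mul, mul_comm]

end RemoveColumn

theorem fallFact_succ (x : ℤ) (j : ℕ) : fallFact x (j + 1) = fallFact x j * (x - j) :=
  prod_range_succ _ _

/-- `b` is regarded as a board with `m` columns; the columns beyond the `m`-th are meant to be
empty. -/
noncomputable def factorialRookPoly (b : Fin n → ℕ) (m : ℕ) (x : ℤ) : ℤ :=
  ∑ k ∈ range (m + 1), (rookNum b k : ℤ) * fallFact x (m - k)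

theorem factorialRookPoly_zero (b : Fin n → ℕ) (x : ℤ) : factorialRookPoly b 0 x = 1 := by
  simp [factorialRookPoly, rookNum_zero, fallFact]

theorem factorialRookPoly_succ {j : Fin n} (hj : ∀ i, b i ≤ b j) {m : ℕ}
    (hm : rookNum (update b j 0) (m + 1) = 0) (x : ℤ) :
    factorialRookPoly b (m + 1) x = (x + b j - m) * factorialRookPoly (update b j 0) m x := by
  set r : ℕ → ℤ := fun k => rookNum (update b j 0) k with hr
  have hsplit : ∀ k ∈ range (m + 1), (x + b j - m) * (r k * fallFact x (m - k)) =
      ((b j : ℤ) - k) * r k * fallFact x (m - k) + r k * fallFact x (m + 1 - k) := by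
    intro k hk
    have hkm : k ≤ m := Nat.lt_succ_iff.mp (mem_range.mp hk)
    rw [Nat.sub_add_comm hkm, fallFact_succ, Nat.cast_sub hkm]
    ring
  have hshift : ∑ k ∈ range (m + 1), r (k + 1) * fallFact x (m - k) + fallFact x (m + 1) =
      ∑ k ∈ range (m + 1), r k * fallFact x (m + 1 - k) := by
    rw [sum_range_succ, sum_range_succ' _ m]
    simp [hr, hm, rookNum_zero]
  calc factorialRookPoly b (m + 1) x
      = ∑ k ∈ range (m + 1), (rookNum b (k + 1) : ℤ) * fallFact x (m - k)
          + fallFact x (m + 1) := by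
        simp [factorialRookPoly, sum_range_succ' _ (m + 1), rookNum_zero]
    _ = ∑ k ∈ range (m + 1), ((b j : ℤ) - k) * r k * fallFact x (m - k)
          + ∑ k ∈ range (m + 1), r k * fallFact x (m + 1 - k) := by
        rw [← hshift]
        simp only [hr, rookNum_succ hj, add_mul, sum_add_distrib]
        ring
    _ = (x + b j - m) * factorialRookPoly (update b j 0) m x := by
        rw [factorialRookPoly, mul_sum, ← sum_add_distrib]
        exact (sum_congr rfl hsplit).symm

def firstColumns (b : Fin n → ℕ) (m : ℕ) : Fin n → ℕ := fun i => if (i : ℕ) < m then b i else 0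

theorem firstColumns_self (b : Fin n → ℕ) : firstColumns b n = b :=
  funext fun i => if_pos i.is_lt

theorem update_firstColumns_succ {m : ℕ} (hm : m < n) :
    update (firstColumns b (m + 1)) ⟨m, hm⟩ 0 = firstColumns b m := by
  funext i
  by_cases hi : i = ⟨m, hm⟩
  · simp [hi, firstColumns]
  · have him : (i : ℕ) ≠ m := fun h => hi (Fin.ext h)
    simp [update_of_ne hi, firstColumns, Nat.le_iff_lt_or_eq, him]

theorem firstColumns_succ_le (hb : Monotone b) {m : ℕ} (hm : m < n) (i : Fin n) :
    firstColumns b (m + 1) i ≤ firstColumns b (m + 1) ⟨m, hm⟩ := by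
  simp only [firstColumns, Nat.lt_succ_self, if_true]
  split_ifs with hi
  · exact hb (Fin.mk_le_mk.mpr (Nat.lt_succ_iff.mp hi))
  · exact Nat.zero_le _

theorem card_firstColumns_ne_zero_le (b : Fin n → ℕ) (m : ℕ) :
    #{i | firstColumns b m i ≠ 0} ≤ m := by
  calc #{i | firstColumns b m i ≠ 0} ≤ #{i : Fin n | (i : ℕ) < m} :=
        card_le_card fun i => by simp +contextual [firstColumns]
    _ ≤ m := Fin.card_filter_val_lt.trans_le (min_le_right _ _)

theorem factorialRookPoly_firstColumns (hb : Monotone b) (x : ℤ) {m : ℕ} (hm : m ≤ n) :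
    factorialRookPoly (firstColumns b m) m x = ∏ i ∈ univ.filter (fun i : Fin n => (i : ℕ) < m),
      (x + (b i : ℤ) - (i : ℤ)) := by
  induction m with
  | zero => simp [factorialRookPoly_zero]
  | succ m ih =>
    have hcols : univ.filter (fun i : Fin n => (i : ℕ) < m + 1) =
        insert ⟨m, hm⟩ (univ.filter fun i : Fin n => (i : ℕ) < m) := by
      ext i
      simp only [mem_filter, mem_univ, true_and, mem_insert, Fin.ext_iff]
      omega
    rw [factorialRookPoly_succ (firstColumns_succ_le hb hm) (rookNum_eq_zero_of_lt ?_),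
      update_firstColumns_succ, ih (by omega), hcols, prod_insert (by simp)]
    · simp [firstColumns]
    · rw [update_firstColumns_succ]
      exact (card_firstColumns_ne_zero_le b m).trans_lt m.lt_succ_self

/-- Goldman–Joichi–White factorization: for a Ferrers board
`b = (b_1,…,b_n)` and every integer `x`,
`∑_{k=0}^n r_k(B) x↓_{n-k} = ∏_{i=1}^n (x + b_i - (i-1))`. -/
theorem stmt13 {n : ℕ} (b : Fin n → ℕ) (hb : Monotone b) :
    ∀ x : ℤ, ∑ k ∈ Finset.range (n + 1), (rookNum b k : ℤ) * fallFact x (n - k) =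
      ∏ i : Fin n, (x + (b i : ℤ) - (i : ℤ)) := by
  intro x
  simpa [factorialRookPoly, firstColumns_self] using factorialRookPoly_firstColumns hb x le_rfl
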